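/- arXiv:math/9606222 — 2 statements merged into one kernel-verified Lean document; each statement's English description precedes it below -/
import Mathlib

section
/- Let f : ℂ → ℂ be an entire function (e.g. a polynomial), let δ > 0, and let μ be a δ-conformal measure for f. If w ∈ ℂ is a periodic point of f of period p (f^p(w) = w) which is expanding, i.e. |(f^p)'(w)| > 1, then μ({w}) = 0. -/
open MeasureTheory

/-- A `δ`-conformal measure for `f : ℂ → ℂ` is a Borel probability measure `μ` such that
`μ (f '' A) = ∫_A |f'(z)|^δ dμ(z)` for every Borel set `A` on which `f` is injective. -/
def IsConformalMeasure (f : ℂ → ℂ) (δ : ℝ) (μ : Measure ℂ) : Prop :=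
  IsProbabilityMeasure μ ∧
    ∀ A : Set ℂ, MeasurableSet A → Set.InjOn f A →
      μ (f '' A) = ∫⁻ z in A, ENNReal.ofReal (‖deriv f z‖ ^ δ) ∂μ

/-! Applying the conformality relation to singletons and iterating along the orbit gives
`μ {f^[p] w} = |(f^p)'(w)|^δ μ {w}`. At a periodic point the left side is `μ {w}` again, so the
finite mass `μ {w}` equals a multiple of itself by a factor `> 1`, hence vanishes. -/

theorem ENNReal.eq_zero_of_eq_mul_of_one_lt {a c : ENNReal} (ha : a ≠ ⊤) (hc : 1 < c)
    (h : a = c * a) : a = 0 := by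
  by_contra ha₀
  have hlt : 1 * a < c * a := ENNReal.mul_lt_mul_left ha₀ ha hc
  rw [one_mul, ← h] at hlt
  exact hlt.false

namespace IsConformalMeasure

variable {f : ℂ → ℂ} {δ : ℝ} {μ : Measure ℂ}

theorem measure_singleton_image (hμ : IsConformalMeasure f δ μ) (z : ℂ) :
    μ {f z} = ENNReal.ofReal (‖deriv f z‖ ^ δ) * μ {z} := by
  have h := hμ.2 {z} (measurableSet_singleton z) (Set.injOn_singleton f z)
  rw [Set.image_singleton, lintegral_singleton] at h
  rw [h, mul_comm]

theorem measure_singleton_iterate (hμ : IsConformalMeasure f δ μ) (hf : Differentiable ℂ f)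
    (n : ℕ) (z : ℂ) :
    μ {f^[n] z} = ENNReal.ofReal (‖deriv (f^[n]) z‖ ^ δ) * μ {z} := by
  induction n with
  | zero => simp
  | succ n ih =>
    rw [Function.iterate_succ_apply', hμ.measure_singleton_image, ih, ← mul_assoc,
      Function.iterate_succ', deriv_comp z (hf _) (hf.iterate n z), norm_mul,
      Real.mul_rpow (norm_nonneg _) (norm_nonneg _), ENNReal.ofReal_mul (by positivity)]

end IsConformalMeasure

theorem expanding_periodic_point_null_general (f : ℂ → ℂ) (hf : Differentiable ℂ f)
    (δ : ℝ) (hδ : 0 < δ) (μ : Measure ℂ) (hμ : IsConformalMeasure f δ μ)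
    (w : ℂ) (p : ℕ) (hper : f^[p] w = w)
    (hexp : 1 < ‖deriv (f^[p]) w‖) :
    μ {w} = 0 := by
  have : IsProbabilityMeasure μ := hμ.1
  have hcycle := hμ.measure_singleton_iterate hf p w
  rw [hper] at hcycle
  exact ENNReal.eq_zero_of_eq_mul_of_one_lt (measure_ne_top μ _)
    (ENNReal.one_lt_ofReal.2 (Real.one_lt_rpow hexp hδ)) hcycle

/-- An expanding (repelling) periodic point carries zero `δ`-conformal measure. -/
theorem expanding_periodic_point_null (f : ℂ → ℂ) (hf : Differentiable ℂ f)
    (δ : ℝ) (hδ : 0 < δ) (μ : Measure ℂ) (hμ : IsConformalMeasure f δ μ)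
    (w : ℂ) (p : ℕ) (hp : 1 ≤ p) (hper : f^[p] w = w)
    (hexp : 1 < ‖deriv (f^[p]) w‖) :
    μ {w} = 0 :=
  expanding_periodic_point_null_general f hf δ hδ μ hμ w p hper hexp
end

section
/- Let f : ℂ → ℂ be an entire function, δ > 0, and μ a δ-conformal measure for f. Let A ⊆ ℂ be a Borel set which is forward invariant, f(A) ⊆ A. Let x ∈ ℂ, and let η > 0, c > 0, K ≥ 1 be constants. Suppose there is a sequence of integers k_j → ∞ such that, writing y_j = f^{k_j}(x), there exist injective holomorphic maps g_j defined on the open ball B(y_j, η) with: (a) g_j(y_j) = x and f^{k_j}(g_j(ζ)) = ζ for all ζ ∈ B(y_j, η); (b) setting λ_j = |g_j'(y_j)|, one has K^{-1}·λ_j ≤ |g_j'(ζ)| ≤ K·λ_j for all ζ ∈ B(y_j, η); (c) g_j(B(y_j, η/2)) ⊆ B(x, K·λ_j·η/2) ⊆ g_j(B(y_j, η)); (d) μ(B(y_j, η/2) \ A) ≥ c; and (e) λ_j → 0 as j → ∞. Then limsup_{r → 0} μ(B(x,r) \ A)/μ(B(x,r)) ≥ K^{-2δ}·c > 0; in particular,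 x is not a μ-Lebesgue density point of A. -/
open MeasureTheory Metric Filter

/-!
Let `y_j = f^{k_j}(x)`. Conformality of `μ` passes to the iterate `f^{k_j}`, and since `g_j` inverts
`f^{k_j}` on `B(y_j, η)`, it transports to `g_j` itself: `μ(g_j E) = ∫_E |g_j'|^δ dμ`. Bounded
distortion therefore gives `μ(g_j E) ≍ λ_j^δ μ(E)` up to factors `K^{±δ}`. By forward invariance,
`g_j` maps `B(y_j, η/2) \ A` into `B(x, r_j) \ A` with `r_j = K λ_j η / 2`, while `B(x, r_j)` lies
in `g_j(B(y_j, η))`, whose measure is at most `(K λ_j)^δ`. So the complement of `A` occupies a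
proportion at least `K^{-2δ} c` of `B(x, r_j)`, and `r_j → 0`.
-/

open Set
open scoped ENNReal Topology

section ChangeOfVariables

variable {α β : Type*} [MeasurableSpace α] [MeasurableSpace β] {μ : Measure α} {ν : Measure β}
  {F : α → β} {J : α → ℝ≥0∞} {S : Set α}

theorem restrict_image_eq_map_withDensity (hF : Measurable F) (hS : MeasurableSet S)
    (hJ : ∀ T ⊆ S, MeasurableSet T → ν (F '' T) = ∫⁻ z in T, J z ∂μ) :
    ν.restrict (F '' S) = ((μ.restrict S).withDensity J).map F := by
  ext E hE
  rw [Measure.restrict_apply hE, inter_comm, ← image_inter_preimage,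
    hJ _ inter_subset_left (hS.inter (hF hE)), Measure.map_apply hF hE,
    withDensity_apply _ (hF hE), Measure.restrict_restrict (hF hE), inter_comm]

theorem setLIntegral_image_eq (hF : Measurable F) (hS : MeasurableSet S) (hJm : Measurable J)
    (hJ : ∀ T ⊆ S, MeasurableSet T → ν (F '' T) = ∫⁻ z in T, J z ∂μ)
    {h : β → ℝ≥0∞} (hh : Measurable h) :
    ∫⁻ w in F '' S, h w ∂ν = ∫⁻ z in S, J z * h (F z) ∂μ := by
  rw [restrict_image_eq_map_withDensity hF hS hJ, lintegral_map hh hF]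
  exact lintegral_withDensity_eq_lintegral_mul _ hJm (hh.comp hF)

end ChangeOfVariables

section InverseBranch

variable {𝕜 : Type*} [NontriviallyNormedField 𝕜] {F g : 𝕜 → 𝕜} {U : Set 𝕜} {ζ : 𝕜}

theorem Set.LeftInvOn.deriv_mul_deriv_eq_one (hFg : LeftInvOn F g U) (hU : IsOpen U)
    (hF : DifferentiableAt 𝕜 F (g ζ)) (hg : DifferentiableOn 𝕜 g U) (hζ : ζ ∈ U) :
    deriv F (g ζ) * deriv g ζ = 1 := by
  have hid : F ∘ g =ᶠ[𝓝 ζ] id := Filter.eventually_of_mem (hU.mem_nhds hζ) hFg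
  rw [← deriv_comp ζ hF (hg.differentiableAt (hU.mem_nhds hζ)), hid.deriv_eq, deriv_id]

end InverseBranch

theorem measurable_ofReal_norm_deriv_rpow (F : ℂ → ℂ) (δ : ℝ) :
    Measurable fun z => ENNReal.ofReal (‖deriv F z‖ ^ δ) :=
  ((measurable_deriv F).norm.pow_const δ).ennreal_ofReal

namespace IsConformalMeasure

variable {f F g : ℂ → ℂ} {δ : ℝ} {μ : Measure ℂ} {U T : Set ℂ}

theorem iterate (hf : Differentiable ℂ f) (hμ : IsConformalMeasure f δ μ) (n : ℕ) :
    IsConformalMeasure f^[n] δ μ := by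
  refine ⟨hμ.1, ?_⟩
  induction n with
  | zero => intro S _ _; simp
  | succ n ih =>
    intro S hS hinj
    rw [Function.iterate_succ'] at hinj ⊢
    have hSn : MeasurableSet (f^[n] '' S) :=
      hS.image_of_continuousOn_injOn (hf.iterate n).continuous.continuousOn hinj.of_comp
    rw [image_comp, hμ.2 _ hSn hinj.image_of_comp,
      setLIntegral_image_eq (hf.iterate n).continuous.measurable hS
        (measurable_ofReal_norm_deriv_rpow _ δ) (fun T hT hTm => ih T hTm (hinj.of_comp.mono hT))
        (measurable_ofReal_norm_deriv_rpow f δ)]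
    refine setLIntegral_congr_fun hS fun z _ => ?_
    rw [deriv_comp z (hf _) (hf.iterate n z), norm_mul,
      Real.mul_rpow (norm_nonneg _) (norm_nonneg _), ENNReal.ofReal_mul (by positivity), mul_comm]

theorem measure_image_eq_setLIntegral (hF : Differentiable ℂ F) (hμ : IsConformalMeasure F δ μ)
    (hU : IsOpen U) (hg : DifferentiableOn ℂ g U) (hFg : LeftInvOn F g U) (hT : MeasurableSet T)
    (hTU : T ⊆ U) :
    μ (g '' T) = ∫⁻ ζ in T, ENNReal.ofReal (‖deriv g ζ‖ ^ δ) ∂μ := by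
  have hFgT := hFg.mono hTU
  have hgT : MeasurableSet (g '' T) :=
    hT.image_of_continuousOn_injOn (hg.continuousOn.mono hTU) hFgT.injOn
  have hFinj : InjOn F (g '' T) := ((injOn_id T).congr hFgT.eqOn.symm).image_of_comp
  calc μ (g '' T)
      = ∫⁻ z in g '' T, ENNReal.ofReal (‖deriv F z‖ ^ δ) *
          ENNReal.ofReal (‖deriv g (F z)‖ ^ δ) ∂μ := by
        rw [← setLIntegral_one]
        refine setLIntegral_congr_fun hgT ?_
        rintro _ ⟨ζ, hζ, rfl⟩
        dsimp only
        rw [hFgT hζ, ← ENNReal.ofReal_mul (by positivity),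
          ← Real.mul_rpow (norm_nonneg _) (norm_nonneg _), ← norm_mul,
          hFg.deriv_mul_deriv_eq_one hU (hF _) hg (hTU hζ), norm_one, Real.one_rpow,
          ENNReal.ofReal_one]
    _ = ∫⁻ ζ in F '' (g '' T), ENNReal.ofReal (‖deriv g ζ‖ ^ δ) ∂μ :=
        (setLIntegral_image_eq hF.continuous.measurable hgT (measurable_ofReal_norm_deriv_rpow F δ)
          (fun S hS hSm => hμ.2 S hSm (hFinj.mono hS)) (measurable_ofReal_norm_deriv_rpow g δ)).symm
    _ = _ := by rw [hFgT.image_image]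

theorem ofReal_rpow_mul_le_measure_image (hF : Differentiable ℂ F)
    (hμ : IsConformalMeasure F δ μ) (hU : IsOpen U) (hg : DifferentiableOn ℂ g U)
    (hFg : LeftInvOn F g U) (hT : MeasurableSet T) (hTU : T ⊆ U) (hδ : 0 ≤ δ) {a : ℝ}
    (ha : 0 ≤ a) (hga : ∀ ζ ∈ T, a ≤ ‖deriv g ζ‖) :
    ENNReal.ofReal (a ^ δ) * μ T ≤ μ (g '' T) := by
  rw [hμ.measure_image_eq_setLIntegral hF hU hg hFg hT hTU, ← setLIntegral_const]
  exact setLIntegral_mono (measurable_ofReal_norm_deriv_rpow g δ) fun ζ hζ =>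
    ENNReal.ofReal_le_ofReal (Real.rpow_le_rpow ha (hga ζ hζ) hδ)

theorem measure_image_le_ofReal_rpow_mul (hF : Differentiable ℂ F)
    (hμ : IsConformalMeasure F δ μ) (hU : IsOpen U) (hg : DifferentiableOn ℂ g U)
    (hFg : LeftInvOn F g U) (hT : MeasurableSet T) (hTU : T ⊆ U) (hδ : 0 ≤ δ) {b : ℝ}
    (hgb : ∀ ζ ∈ T, ‖deriv g ζ‖ ≤ b) :
    μ (g '' T) ≤ ENNReal.ofReal (b ^ δ) * μ T := by
  rw [hμ.measure_image_eq_setLIntegral hF hU hg hFg hT hTU, ← setLIntegral_const]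
  exact setLIntegral_mono measurable_const fun ζ hζ =>
    ENNReal.ofReal_le_ofReal (Real.rpow_le_rpow (norm_nonneg _) (hgb ζ hζ) hδ)

theorem ofReal_le_measure_diff_div_measure (hF : Differentiable ℂ F)
    (hμ : IsConformalMeasure F δ μ) (hδ : 0 ≤ δ) {A V B : Set ℂ} (hA : MeasurableSet A)
    (hAinv : MapsTo F A A) (hU : IsOpen U) (hVU : V ⊆ U) (hV : MeasurableSet V)
    (hg : DifferentiableOn ℂ g U) (hFg : LeftInvOn F g U) {c K lam : ℝ} (hK : 0 < K)
    (hlam : 0 < lam)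
    (hdist : ∀ ζ ∈ U, K⁻¹ * lam ≤ ‖deriv g ζ‖ ∧ ‖deriv g ζ‖ ≤ K * lam)
    (hB : g '' V ⊆ B ∧ B ⊆ g '' U) (hc : ENNReal.ofReal c ≤ μ (V \ A)) :
    ENNReal.ofReal (K ^ (-(2 * δ)) * c) ≤ μ (B \ A) / μ B := by
  have : IsProbabilityMeasure μ := hμ.1
  have hVA : V \ A ⊆ U := sdiff_subset.trans hVU
  have hmaps : g '' (V \ A) ⊆ B \ A := by
    rintro _ ⟨ζ, ⟨hζV, hζA⟩, rfl⟩
    exact ⟨hB.1 (mem_image_of_mem g hζV), fun hgA => hζA (hFg (hVU hζV) ▸ hAinv hgA)⟩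
  have hlow : ENNReal.ofReal ((K⁻¹ * lam) ^ δ * c) ≤ μ (B \ A) :=
    calc ENNReal.ofReal ((K⁻¹ * lam) ^ δ * c)
        = ENNReal.ofReal ((K⁻¹ * lam) ^ δ) * ENNReal.ofReal c := ENNReal.ofReal_mul (by positivity)
      _ ≤ ENNReal.ofReal ((K⁻¹ * lam) ^ δ) * μ (V \ A) := by gcongr
      _ ≤ μ (g '' (V \ A)) :=
          hμ.ofReal_rpow_mul_le_measure_image hF hU hg hFg (hV.diff hA) hVA hδ (by positivity)
            fun ζ hζ => (hdist ζ (hVA hζ)).1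
      _ ≤ μ (B \ A) := measure_mono hmaps
  have hup : μ B ≤ ENNReal.ofReal ((K * lam) ^ δ) :=
    calc μ B ≤ μ (g '' U) := measure_mono hB.2
      _ ≤ ENNReal.ofReal ((K * lam) ^ δ) * μ U :=
          hμ.measure_image_le_ofReal_rpow_mul hF hU hg hFg hU.measurableSet subset_rfl hδ
            fun ζ hζ => (hdist ζ hζ).2
      _ ≤ ENNReal.ofReal ((K * lam) ^ δ) := mul_le_of_le_one_right' prob_le_one
  calc ENNReal.ofReal (K ^ (-(2 * δ)) * c)
      = ENNReal.ofReal ((K⁻¹ * lam) ^ δ * c / (K * lam) ^ δ) := by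
        congr 1
        rw [Real.mul_rpow (by positivity) hlam.le, Real.mul_rpow hK.le hlam.le,
          Real.inv_rpow hK.le, show -(2 * δ) = -δ + -δ by ring, Real.rpow_add hK,
          Real.rpow_neg hK.le]
        field_simp
    _ = ENNReal.ofReal ((K⁻¹ * lam) ^ δ * c) / ENNReal.ofReal ((K * lam) ^ δ) :=
        ENNReal.ofReal_div_of_pos (by positivity)
    _ ≤ μ (B \ A) / μ B := ENNReal.div_le_div hlow hup

end IsConformalMeasure

theorem not_tendsto_measure_inter_div_of_frequently_le {α ι : Type*} [MeasurableSpace α]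
    {μ : Measure α} {A : Set α} {B : ι → Set α} {l : Filter ι} {ε : ℝ≥0∞} (hA : MeasurableSet A)
    (hε : ε ≠ 0) (h : ∃ᶠ i in l, ε ≤ μ (B i \ A) / μ (B i)) :
    ¬Tendsto (fun i => μ (B i ∩ A) / μ (B i)) l (𝓝 1) := by
  intro hlim
  have hlt : 1 - ε < 1 := ENNReal.sub_lt_self ENNReal.one_ne_top one_ne_zero hε
  obtain ⟨i, hεi, hi⟩ := (h.and_eventually (hlim.eventually_const_lt hlt)).exists
  have hsum : μ (B i ∩ A) / μ (B i) + μ (B i \ A) / μ (B i) ≤ 1 := by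
    rw [ENNReal.div_add_div_same, measure_inter_add_sdiff _ hA]
    exact ENNReal.div_self_le_one
  have hεtop : ε ≠ ⊤ := (hεi.trans (le_add_self.trans hsum)).trans_lt ENNReal.one_lt_top |>.ne
  exact hi.not_ge (ENNReal.le_sub_of_add_le_right hεtop ((add_le_add le_rfl hεi).trans hsum))

theorem not_density_point_of_pullback_general (f : ℂ → ℂ) (hf : Differentiable ℂ f)
    (δ : ℝ) (hδ : 0 < δ) (μ : Measure ℂ) (hμ : IsConformalMeasure f δ μ)
    (A : Set ℂ) (hA : MeasurableSet A) (hAinv : f '' A ⊆ A)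
    (x : ℂ) (η c K : ℝ) (hη : 0 < η) (hc : 0 < c) (hK : 1 ≤ K)
    (k : ℕ → ℕ)
    (g : ℕ → ℂ → ℂ) (lam : ℕ → ℝ)
    (hghol : ∀ j, DifferentiableOn ℂ (g j) (ball (f^[k j] x) η))
    (hginv : ∀ j, ∀ ζ ∈ ball (f^[k j] x) η, f^[k j] (g j ζ) = ζ)
    (hgdist : ∀ j, ∀ ζ ∈ ball (f^[k j] x) η,
      K⁻¹ * lam j ≤ ‖deriv (g j) ζ‖ ∧
        ‖deriv (g j) ζ‖ ≤ K * lam j)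
    (hgball : ∀ j,
      g j '' ball (f^[k j] x) (η / 2) ⊆ ball x (K * lam j * η / 2) ∧
        ball x (K * lam j * η / 2) ⊆ g j '' ball (f^[k j] x) η)
    (hmeas : ∀ j, ENNReal.ofReal c ≤ μ (ball (f^[k j] x) (η / 2) \ A))
    (hlam0 : Tendsto lam atTop (nhds 0)) :
    ENNReal.ofReal (K ^ (-(2 * δ)) * c) ≤
        limsup (fun r : ℝ => μ (ball x r \ A) / μ (ball x r)) (nhdsWithin 0 (Set.Ioi 0)) ∧
      ¬ Tendsto (fun r : ℝ => μ (ball x r ∩ A) / μ (ball x r))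
          (nhdsWithin 0 (Set.Ioi 0)) (nhds 1) := by
  have hK0 : 0 < K := zero_lt_one.trans_le hK
  have hcenter : ∀ j, f^[k j] x ∈ ball (f^[k j] x) η := fun _ => mem_ball_self hη
  have hlam_pos : ∀ j, 0 < lam j := fun j => by
    have hne : deriv (g j) (f^[k j] x) ≠ 0 := right_ne_zero_of_mul_eq_one <|
      LeftInvOn.deriv_mul_deriv_eq_one (hginv j) isOpen_ball ((hf.iterate _) _) (hghol j)
        (hcenter j)
    exact pos_of_mul_pos_right ((norm_pos_iff.2 hne).trans_le (hgdist j _ (hcenter j)).2) hK0.le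
  have hr : Tendsto (fun j => K * lam j * η / 2) atTop (𝓝[>] 0) := by
    refine tendsto_nhdsWithin_of_tendsto_nhds_of_eventually_within _ ?_
      (.of_forall fun j => mem_Ioi.2 (by have := hlam_pos j; positivity))
    simpa using ((hlam0.const_mul K).mul_const η).div_const 2
  have hratio : ∃ᶠ r in 𝓝[>] 0,
      ENNReal.ofReal (K ^ (-(2 * δ)) * c) ≤ μ (ball x r \ A) / μ (ball x r) :=
    hr.frequently <| .of_forall fun j =>
      (hμ.iterate hf (k j)).ofReal_le_measure_diff_div_measure (hf.iterate _) hδ.le hA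
        ((mapsTo_iff_image_subset.2 hAinv).iterate _) isOpen_ball
        (ball_subset_ball (half_le_self hη.le)) measurableSet_ball (hghol j) (hginv j) hK0
        (hlam_pos j) (hgdist j) (hgball j) (hmeas j)
  exact ⟨le_limsup_of_frequently_le' hratio,
    not_tendsto_measure_inter_div_of_frequently_le hA
      (ENNReal.ofReal_pos.2 (by positivity)).ne' hratio⟩

/-- Quantitative pull-back estimate: univalent inverse branches with bounded distortion
along a sequence of iterates transport a definite amount of the complement of a forward
invariant set `A` back to every scale at `x`; hence `x` is not a density point of `A`. -/
theorem not_density_point_of_pullback (f : ℂ → ℂ) (hf : Differentiable ℂ f)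
    (δ : ℝ) (hδ : 0 < δ) (μ : Measure ℂ) (hμ : IsConformalMeasure f δ μ)
    (A : Set ℂ) (hA : MeasurableSet A) (hAinv : f '' A ⊆ A)
    (x : ℂ) (η c K : ℝ) (hη : 0 < η) (hc : 0 < c) (hK : 1 ≤ K)
    (k : ℕ → ℕ) (hk : Tendsto k atTop atTop)
    (g : ℕ → ℂ → ℂ) (lam : ℕ → ℝ)
    (hlam : ∀ j, lam j = ‖deriv (g j) (f^[k j] x)‖)
    (hghol : ∀ j, DifferentiableOn ℂ (g j) (ball (f^[k j] x) η))
    (hginj : ∀ j, Set.InjOn (g j) (ball (f^[k j] x) η))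
    (hgx : ∀ j, g j (f^[k j] x) = x)
    (hginv : ∀ j, ∀ ζ ∈ ball (f^[k j] x) η, f^[k j] (g j ζ) = ζ)
    (hgdist : ∀ j, ∀ ζ ∈ ball (f^[k j] x) η,
      K⁻¹ * lam j ≤ ‖deriv (g j) ζ‖ ∧
        ‖deriv (g j) ζ‖ ≤ K * lam j)
    (hgball : ∀ j,
      g j '' ball (f^[k j] x) (η / 2) ⊆ ball x (K * lam j * η / 2) ∧
        ball x (K * lam j * η / 2) ⊆ g j '' ball (f^[k j] x) η)
    (hmeas : ∀ j, ENNReal.ofReal c ≤ μ (ball (f^[k j] x) (η / 2) \ A))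
    (hlam0 : Tendsto lam atTop (nhds 0)) :
    ENNReal.ofReal (K ^ (-(2 * δ)) * c) ≤
        limsup (fun r : ℝ => μ (ball x r \ A) / μ (ball x r)) (nhdsWithin 0 (Set.Ioi 0)) ∧
      ¬ Tendsto (fun r : ℝ => μ (ball x r ∩ A) / μ (ball x r))
          (nhdsWithin 0 (Set.Ioi 0)) (nhds 1) :=
  not_density_point_of_pullback_general f hf δ hδ μ hμ A hA hAinv x η c K hη hc hK k g lam hghol
    hginv hgdist hgball hmeas hlam0
end
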